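/- arXiv:2002.05993 — 4 statements merged into one kernel-verified Lean document; each statement's English description precedes it below -/
import Mathlib

section
/- There exists an ℝ-algebra isomorphism from the Clifford algebra of the degenerate quadratic form Q_P onto the subalgebra CGA₀ of CGA which sends the Clifford generator ι_P(e₀) to ι(e₀) and ι_P(eᵢ) to ι(eᵢ) for i = 1, 2, 3; in other words, PGA is isomorphic, as an ℝ-algebra, to the subalgebra CGA₀ of CGA. -/
open CliffordAlgebra

/-- The matrix of the CGA inner product on `V = ℝ⁵`; indices `0, 1, 2, 3, 4`
correspond to the basis `e₀, e₁, e₂, e₃, e∞`. -/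
def Bmat : Matrix (Fin 5) (Fin 5) ℝ :=
  !![0, 0, 0, 0, -1;
     0, 1, 0, 0, 0;
     0, 0, 1, 0, 0;
     0, 0, 0, 1, 0;
     -1, 0, 0, 0, 0]

/-- The CGA quadratic form
`Q(a e₀ + x₁e₁ + x₂e₂ + x₃e₃ + b e∞) = x₁² + x₂² + x₃² − 2ab`. -/
noncomputable def Q : QuadraticForm ℝ (Fin 5 → ℝ) := Bmat.toQuadraticMap'

/-- The basis vectors of `V = ℝ⁵`: `e 0 = e₀`, `e 1, e 2, e 3` Euclidean, `e 4 = e∞`. -/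
def e (i : Fin 5) : Fin 5 → ℝ := Pi.single i 1

/-- The linear map `♯ : V → V` fixing `e₁, e₂, e₃` and sending `e₀ ↦ -e∞`, `e∞ ↦ -e₀`. -/
def sharpV : (Fin 5 → ℝ) →ₗ[ℝ] (Fin 5 → ℝ) where
  toFun v i := if i = 0 then -(v 4) else if i = 4 then -(v 0) else v i
  map_add' u v := by
    funext i
    by_cases h : i = 0 <;> by_cases h' : i = 4 <;> simp [h, h'] <;> ring
  map_smul' c v := by
    funext i
    by_cases h : i = 0 <;> by_cases h' : i = 4 <;> simp [h, h'] <;> ring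

/-- The subalgebra `CGA₀` of CGA generated by `ι(e₀), ι(e₁), ι(e₂), ι(e₃)`. -/
noncomputable def CGA₀ : Subalgebra ℝ (CliffordAlgebra Q) :=
  Algebra.adjoin ℝ {ι Q (e 0), ι Q (e 1), ι Q (e 2), ι Q (e 3)}

/-- The matrix of the degenerate PGA quadratic form (signature `(3,0,1)`);
indices `0, 1, 2, 3` correspond to the basis `e₀, e₁, e₂, e₃` of `ℝ⁴`. -/
def BmatP : Matrix (Fin 4) (Fin 4) ℝ :=
  !![0, 0, 0, 0;
     0, 1, 0, 0;
     0, 0, 1, 0;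
     0, 0, 0, 1]

/-- The PGA quadratic form `Q_P(a e₀ + x₁e₁ + x₂e₂ + x₃e₃) = x₁² + x₂² + x₃²`. -/
noncomputable def QP : QuadraticForm ℝ (Fin 4 → ℝ) := BmatP.toQuadraticMap'

/-! The isometry `ℝ⁴ → ℝ⁵`, `eᵢ ↦ eᵢ`, induces an algebra map `PGA → CGA` whose range is generated
by `ι(e₀), …, ι(e₃)`, i.e. is `CGA₀`. It is injective because CGA acts on PGA by a Fock-type
representation: `v ∈ ℝ⁵` acts by left multiplication with `ι(v₀e₀ + v₁e₁ + v₂e₂ + v₃e₃)` plus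
`-2v₄` times contraction with the dual vector `e₀*`. Multiplication by `ι m` and contraction with
`d` anticommute to `d m`, and contractions square to zero, so these operators satisfy the Clifford
relation of `Q`; pulled back to PGA this is the left regular representation, which is faithful. -/

namespace CliffordAlgebra

variable {R M₁ M₂ : Type*} [CommRing R] [AddCommGroup M₁] [AddCommGroup M₂]
  [Module R M₁] [Module R M₂] {Q₁ : QuadraticForm R M₁} {Q₂ : QuadraticForm R M₂}

theorem range_map (f : Q₁ →qᵢ Q₂) :
    (map f).range = Algebra.adjoin R (ι Q₂ '' LinearMap.range f.toLinearMap) := by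
  have h : map f ∘ ι Q₁ = ι Q₂ ∘ f := funext (map_apply_ι f)
  rw [← Algebra.map_top, ← adjoin_range_ι, ← Algebra.adjoin_image, ← Set.range_comp, h,
    Set.range_comp, LinearMap.coe_range]
  rfl

section Fock

variable (Q₁) (p : M₂ →ₗ[R] M₁) (c : M₂ →ₗ[R] Module.Dual R M₁)

def fockOp : M₂ →ₗ[R] Module.End R (CliffordAlgebra Q₁) :=
  LinearMap.mul R (CliffordAlgebra Q₁) ∘ₗ ι Q₁ ∘ₗ p + contractLeft ∘ₗ c

theorem fockOp_mul_self (v : M₂) :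
    fockOp Q₁ p c v * fockOp Q₁ p c v = algebraMap R _ (Q₁ (p v) + c v (p v)) := by
  ext x
  simp only [fockOp, LinearMap.add_apply, LinearMap.comp_apply, Module.End.mul_apply,
    LinearMap.mul_apply', map_add, contractLeft_ι_mul, contractLeft_contractLeft,
    ← mul_assoc, ι_sq_scalar, Algebra.algebraMap_eq_smul_one, smul_mul_assoc, one_mul]
  abel

variable {Q₁ p c}

def fockRep (hQ : ∀ v, Q₂ v = Q₁ (p v) + c v (p v)) :
    CliffordAlgebra Q₂ →ₐ[R] Module.End R (CliffordAlgebra Q₁) :=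
  lift Q₂ ⟨fockOp Q₁ p c, fun v => by rw [fockOp_mul_self, hQ]⟩

theorem fockRep_comp_map (hQ : ∀ v, Q₂ v = Q₁ (p v) + c v (p v)) (f : Q₁ →qᵢ Q₂)
    (hp : p ∘ₗ f.toLinearMap = LinearMap.id) (hc : c ∘ₗ f.toLinearMap = 0) :
    (fockRep hQ).comp (map f) = Algebra.lmul R (CliffordAlgebra Q₁) := by
  refine hom_ext (LinearMap.ext fun m => ?_)
  have hpm : p (f m) = m := LinearMap.congr_fun hp m
  have hcm : c (f m) = 0 := LinearMap.congr_fun hc m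
  simp [fockRep, fockOp, hpm, hcm]

theorem map_injective_of_retraction (hQ : ∀ v, Q₂ v = Q₁ (p v) + c v (p v)) (f : Q₁ →qᵢ Q₂)
    (hp : p ∘ₗ f.toLinearMap = LinearMap.id) (hc : c ∘ₗ f.toLinearMap = 0) :
    Function.Injective (map f) := by
  intro x y hxy
  apply Algebra.lmul_injective (R := R)
  rw [← fockRep_comp_map hQ f hp hc, AlgHom.comp_apply, AlgHom.comp_apply, hxy]

end Fock

end CliffordAlgebra

noncomputable def pad : (Fin 4 → ℝ) →ₗ[ℝ] (Fin 5 → ℝ) :=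
  (Pi.basisFun ℝ (Fin 4)).constr ℝ fun i => e (Fin.castLE (by norm_num) i)

def restrict : (Fin 5 → ℝ) →ₗ[ℝ] (Fin 4 → ℝ) := LinearMap.funLeft ℝ ℝ (Fin.castLE (by norm_num))

def nullDual : (Fin 5 → ℝ) →ₗ[ℝ] Module.Dual ℝ (Fin 4 → ℝ) :=
  (-2 • LinearMap.proj 4).smulRight (LinearMap.proj 0)

theorem Q_eq_QP_restrict_add (v : Fin 5 → ℝ) :
    Q v = QP (restrict v) + nullDual v (restrict v) := by
  simp [Q, Bmat, QP, BmatP, restrict, nullDual, Matrix.toQuadraticMap', Matrix.toQuadraticForm',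
    LinearMap.BilinMap.toQuadraticMap_apply, Matrix.toLinearMap₂'_apply, Fin.sum_univ_five,
    Fin.sum_univ_four, LinearMap.funLeft]
  ring

theorem pad_single (i : Fin 4) : pad (Pi.single i 1) = e (Fin.castLE (by norm_num) i) := by
  rw [← Pi.basisFun_apply ℝ, pad, Module.Basis.constr_basis]

theorem restrict_comp_pad : restrict ∘ₗ pad = LinearMap.id :=
  (Pi.basisFun ℝ (Fin 4)).ext fun i => by
    funext j
    simp [pad_single, restrict, e, LinearMap.funLeft, Pi.single_apply, Fin.ext_iff]

theorem nullDual_comp_pad : nullDual ∘ₗ pad = 0 :=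
  (Pi.basisFun ℝ (Fin 4)).ext fun i => by
    simp [pad_single, nullDual, e, Pi.single_apply, Fin.ext_iff]
    omega

noncomputable def padIsometry : QP →qᵢ Q where
  toLinearMap := pad
  map_app' m := by
    change Q (pad m) = QP m
    rw [Q_eq_QP_restrict_add, ← LinearMap.comp_apply restrict, restrict_comp_pad,
      ← LinearMap.comp_apply nullDual, nullDual_comp_pad]
    simp

theorem range_map_padIsometry : (CliffordAlgebra.map padIsometry).range = CGA₀ := by
  rw [CliffordAlgebra.range_map]
  change Algebra.adjoin ℝ (ι Q '' LinearMap.range pad) = _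
  rw [pad, Module.Basis.constr_range, ← Submodule.map_coe, Submodule.map_span, Algebra.adjoin_span,
    ← Set.range_comp, CGA₀]
  congr 1
  ext x
  simp [Fin.exists_fin_succ, eq_comm]

/-- There is an ℝ-algebra isomorphism from `PGA = CliffordAlgebra QP`
onto the subalgebra `CGA₀` of CGA sending `ι_P(eᵢ)` to `ι(eᵢ)` for `i = 0, 1, 2, 3`. -/
theorem pga_iso_cga0 :
    ∃ f : CliffordAlgebra QP ≃ₐ[ℝ] CGA₀,
      ∀ i : Fin 4,
        ((f (ι QP (Pi.single i 1)) : CGA₀) : CliffordAlgebra Q) =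
          ι Q (Pi.single (Fin.castLE (by norm_num) i) 1) := by
  have hinj : Function.Injective (map padIsometry) :=
    map_injective_of_retraction Q_eq_QP_restrict_add padIsometry restrict_comp_pad nullDual_comp_pad
  refine ⟨(AlgEquiv.ofInjective _ hinj).trans (Subalgebra.equivOfEq _ _ range_map_padIsometry),
    fun i => ?_⟩
  change map padIsometry (ι QP (Pi.single i 1)) = _
  rw [map_apply_ι]
  exact congrArg (ι Q) (pad_single i)
end

section
/- (Proposition: PGA duality via CGA duality.) For every A in the subalgebra CGA₀, the two twisted-dual expressions agree: ♯((A ∧ e∞) I_c⁻¹) = ((♯A) ∧ e₀) I_c⁻¹, i.e. ♯((A ∧ e∞)*) = ((♯A) ∧ e₀)*, where X* := X I_c⁻¹ = −X I_c is the CGA dual. -/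
/-!
Both sides are computed through the fact that `♯` is an algebra endomorphism sending vectors to
vectors, hence commuting with the grade involution and with `∧ v` up to `v ↦ ♯v`. This turns the
left side into `(♯A ∧ ♯e∞) · ♯(−I_c) = −(♯A ∧ e₀) · ♯(−I_c)`. Since `e₀, e∞ ⊥ e₁, e₂, e₃`, one has
`I_c = ½ (e₀e∞ − e∞e₀) · α(e₁e₂e₃)`, which is antisymmetric in `(e₀, e∞)`; as `♯` swaps `e₀` and
`e∞` up to a sign each, `♯I_c = −I_c`.
-/

open CliffordAlgebra

/-- Outer (wedge) product of a multivector with a vector: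
`A ∧ v := ½ (A ι(v) + ι(v) α(A))`, where `α` is the grade involution. -/
noncomputable def wedgeVec (A : CliffordAlgebra Q) (v : Fin 5 → ℝ) : CliffordAlgebra Q :=
  (1 / 2 : ℝ) • (A * ι Q v + ι Q v * involute A)

/-- The conformal pseudoscalar `I_c = (((e₀ ∧ e₁) ∧ e₂) ∧ e₃) ∧ e∞`. -/
noncomputable def Ic : CliffordAlgebra Q :=
  wedgeVec (wedgeVec (wedgeVec (wedgeVec (ι Q (e 0)) (e 1)) (e 2)) (e 3)) (e 4)

theorem polar_Q (x y : Fin 5 → ℝ) :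
    QuadraticMap.polar Q x y = 2 * (x 1 * y 1 + x 2 * y 2 + x 3 * y 3 - x 0 * y 4 - x 4 * y 0) := by
  change QuadraticMap.polar Bmat.toQuadraticForm' x y = _
  rw [Matrix.toQuadraticForm', LinearMap.BilinMap.polar_toQuadraticMap]
  simp only [Bmat, Matrix.toLinearMap₂'_apply', dotProduct, Matrix.mulVec, Matrix.of_apply,
    Matrix.cons_val', Matrix.cons_val_fin_one, Fin.sum_univ_five, Matrix.cons_val_zero,
    Matrix.cons_val_one, Matrix.cons_val, zero_mul, add_zero, neg_mul, one_mul, zero_add, mul_neg]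
  ring

theorem isOrtho_Q_iff {x y : Fin 5 → ℝ} :
    Q.IsOrtho x y ↔ x 1 * y 1 + x 2 * y 2 + x 3 * y 3 - x 0 * y 4 - x 4 * y 0 = 0 := by
  rw [← QuadraticMap.isOrtho_polarBilin, QuadraticMap.polarBilin_apply_apply, polar_Q]
  simp

theorem map_involute_of_map_ι {R M : Type*} [CommRing R] [AddCommGroup M] [Module R M]
    {Q' : QuadraticForm R M} {F : CliffordAlgebra Q' →ₐ[R] CliffordAlgebra Q'} {f : M →ₗ[R] M}
    (hF : ∀ v, F (ι Q' v) = ι Q' (f v)) (x : CliffordAlgebra Q') :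
    F (involute x) = involute (F x) := by
  suffices h : F.comp involute = involute.comp F from AlgHom.congr_fun h x
  ext v
  simp [hF]

theorem ι_mul_involute_listProd {l : List (Fin 5 → ℝ)} {v : Fin 5 → ℝ}
    (h : ∀ u ∈ l, Q.IsOrtho u v) :
    ι Q v * involute (l.map (ι Q)).prod = (l.map (ι Q)).prod * ι Q v := by
  induction l with
  | nil => simp
  | cons u l ih =>
    simp only [List.forall_mem_cons] at h
    simp only [List.map_cons, List.prod_cons, map_mul, involute_ι]
    rw [mul_assoc (ι Q u), ← ih h.2, ← mul_assoc (ι Q u), ι_mul_ι_comm_of_isOrtho h.1]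
    noncomm_ring

theorem wedgeVec_of_ι_mul_involute {A : CliffordAlgebra Q} {v : Fin 5 → ℝ}
    (h : ι Q v * involute A = A * ι Q v) : wedgeVec A v = A * ι Q v := by
  rw [wedgeVec, h, ← two_smul ℝ, smul_smul]
  norm_num

theorem wedgeVec_listProd {l : List (Fin 5 → ℝ)} {v : Fin 5 → ℝ}
    (h : ∀ u ∈ l, Q.IsOrtho u v) :
    wedgeVec (l.map (ι Q)).prod v = ((l ++ [v]).map (ι Q)).prod := by
  rw [wedgeVec_of_ι_mul_involute (ι_mul_involute_listProd h)]
  simp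

theorem wedgeVec_ι_mul_listProd {l : List (Fin 5 → ℝ)} (a b : Fin 5 → ℝ)
    (h : ∀ u ∈ l, Q.IsOrtho u b) :
    wedgeVec (ι Q a * (l.map (ι Q)).prod) b =
      (1 / 2 : ℝ) • ((ι Q a * ι Q b - ι Q b * ι Q a) * involute (l.map (ι Q)).prod) := by
  rw [wedgeVec, mul_assoc, ← ι_mul_involute_listProd h, map_mul, involute_ι]
  noncomm_ring

theorem wedgeVec_neg_left (A : CliffordAlgebra Q) (v : Fin 5 → ℝ) :
    wedgeVec (-A) v = -wedgeVec A v := by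
  rw [wedgeVec, wedgeVec, map_neg, neg_mul, mul_neg, ← neg_add, smul_neg]

theorem wedgeVec_neg_right (A : CliffordAlgebra Q) (v : Fin 5 → ℝ) :
    wedgeVec A (-v) = -wedgeVec A v := by
  rw [wedgeVec, wedgeVec, map_neg, neg_mul, mul_neg, ← neg_add, smul_neg]

theorem sharpV_apply (v : Fin 5 → ℝ) (i : Fin 5) :
    sharpV v i = if i = 0 then -(v 4) else if i = 4 then -(v 0) else v i := rfl

theorem sharpV_e_zero : sharpV (e 0) = -e 4 := by
  funext j; fin_cases j <;> simp [sharpV_apply, e]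

theorem sharpV_e_four : sharpV (e 4) = -e 0 := by
  funext j; fin_cases j <;> simp [sharpV_apply, e]

theorem sharpV_e_of_ne {i : Fin 5} (h0 : i ≠ 0) (h4 : i ≠ 4) : sharpV (e i) = e i := by
  funext j
  by_cases hj0 : j = 0 <;> by_cases hj4 : j = 4 <;> simp [sharpV_apply, e, Pi.single_apply, *]

theorem map_wedgeVec {F : CliffordAlgebra Q →ₐ[ℝ] CliffordAlgebra Q}
    {f : (Fin 5 → ℝ) →ₗ[ℝ] (Fin 5 → ℝ)} (hF : ∀ v, F (ι Q v) = ι Q (f v))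
    (A : CliffordAlgebra Q) (v : Fin 5 → ℝ) :
    F (wedgeVec A v) = wedgeVec (F A) (f v) := by
  rw [wedgeVec, map_smul, map_add, map_mul, map_mul, hF, map_involute_of_map_ι hF, wedgeVec]

noncomputable def spatialWedge (a b : Fin 5 → ℝ) : CliffordAlgebra Q :=
  wedgeVec (wedgeVec (wedgeVec (wedgeVec (ι Q a) (e 1)) (e 2)) (e 3)) b

theorem Ic_eq_spatialWedge : Ic = spatialWedge (e 0) (e 4) := rfl

theorem map_spatialWedge {F : CliffordAlgebra Q →ₐ[ℝ] CliffordAlgebra Q}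
    (hF : ∀ v, F (ι Q v) = ι Q (sharpV v)) (a b : Fin 5 → ℝ) :
    F (spatialWedge a b) = spatialWedge (sharpV a) (sharpV b) := by
  simp only [spatialWedge, map_wedgeVec hF, hF]
  rw [sharpV_e_of_ne (i := 1) (by decide) (by decide),
    sharpV_e_of_ne (i := 2) (by decide) (by decide),
    sharpV_e_of_ne (i := 3) (by decide) (by decide)]

theorem spatialWedge_eq {a b : Fin 5 → ℝ} (ha : a 1 = 0 ∧ a 2 = 0 ∧ a 3 = 0)
    (hb : b 1 = 0 ∧ b 2 = 0 ∧ b 3 = 0) :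
    spatialWedge a b = (1 / 2 : ℝ) •
      ((ι Q a * ι Q b - ι Q b * ι Q a) * involute ([e 1, e 2, e 3].map (ι Q)).prod) := by
  have ha' : ι Q a = ([a].map (ι Q)).prod := by simp
  rw [spatialWedge, ha', wedgeVec_listProd, wedgeVec_listProd, wedgeVec_listProd]
  · simpa using
      wedgeVec_ι_mul_listProd a b (l := [e 1, e 2, e 3]) (by simp [isOrtho_Q_iff, e, hb])
  all_goals simp [isOrtho_Q_iff, e, ha]

theorem spatialWedge_comm {a b : Fin 5 → ℝ} (ha : a 1 = 0 ∧ a 2 = 0 ∧ a 3 = 0)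
    (hb : b 1 = 0 ∧ b 2 = 0 ∧ b 3 = 0) :
    spatialWedge b a = -spatialWedge a b := by
  rw [spatialWedge_eq ha hb, spatialWedge_eq hb ha, ← smul_neg, ← neg_mul, neg_sub]

theorem spatialWedge_neg_neg (a b : Fin 5 → ℝ) : spatialWedge (-a) (-b) = spatialWedge a b := by
  simp only [spatialWedge, map_neg, wedgeVec_neg_left, wedgeVec_neg_right, neg_neg]

theorem map_Ic {F : CliffordAlgebra Q →ₐ[ℝ] CliffordAlgebra Q}
    (hF : ∀ v, F (ι Q v) = ι Q (sharpV v)) : F Ic = -Ic := by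
  rw [Ic_eq_spatialWedge, map_spatialWedge hF, sharpV_e_zero, sharpV_e_four, spatialWedge_neg_neg,
    spatialWedge_comm (by simp [e]) (by simp [e])]

/-- For every `A ∈ CGA₀`, `♯((A ∧ e∞) I_c⁻¹) = ((♯A) ∧ e₀) I_c⁻¹`,
where `X* := X I_c⁻¹ = −X I_c` is the CGA dual. -/
theorem pga_dual_via_cga (F : CliffordAlgebra Q →ₐ[ℝ] CliffordAlgebra Q)
    (hF : ∀ v : Fin 5 → ℝ, F (ι Q v) = ι Q (sharpV v)) :
    ∀ A ∈ CGA₀,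
      F (wedgeVec A (e 4) * (-Ic)) = wedgeVec (F A) (e 0) * (-Ic) := by
  intro A _
  rw [map_mul, map_neg, map_Ic hF, map_wedgeVec hF, sharpV_e_four, wedgeVec_neg_right, neg_mul_neg]
end

section
/- (Line correspondence.) For all x₁, x₂ ∈ E = span{e₁, e₂, e₃}, the image under ♯ of the PGA line through the PGA points P(x₁), P(x₂) equals the CGA dual (IPNS) representation of that line: ♯(ℓ) = ((ι(v_{x₁}) ∧ ι(v_{x₂})) ∧ e∞) I_c⁻¹, where ℓ := (ι(e₀+x₁) ∧ ι(e₀+x₂))^{*_P} is the regressive product P(x₁) ∨ P(x₂) (using that P(xᵢ)^{*_P} = ι(e₀+xᵢ)), v_y := e₀ + y + ½Q(y)e∞, and for vectors u, w ∈ V, ι(u) ∧ ι(w) := ½(ι(u)ι(w) − ι(w)ι(u)). -/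
open CliffordAlgebra

/-- The conformal embedding `v_x = e₀ + x + ½ Q(x) e∞` of a Euclidean point `x`. -/
noncomputable def vpt (x : Fin 5 → ℝ) : Fin 5 → ℝ :=
  e 0 + x + (Q x / 2) • e 4

/-- The wedge product of two vectors: `ι(u) ∧ ι(w) := ½(ι(u)ι(w) − ι(w)ι(u))`. -/
noncomputable def wedge2 (u w : Fin 5 → ℝ) : CliffordAlgebra Q :=
  (1 / 2 : ℝ) • (ι Q u * ι Q w - ι Q w * ι Q u)

/-- The projective (PGA) dual `A^{*_P} := ♯((A ∧ e∞) I_c⁻¹)`, with `I_c⁻¹ = -I_c`,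
expressed relative to a realization `F` of the involution `♯` on the Clifford algebra
(i.e. `F` is the algebra endomorphism induced by the isometry `♯ : V → V`,
characterized by `F (ι v) = ι (♯ v)`). -/
noncomputable def dualP (F : CliffordAlgebra Q →ₐ[ℝ] CliffordAlgebra Q)
    (A : CliffordAlgebra Q) : CliffordAlgebra Q :=
  F (wedgeVec A (e 4) * (-Ic))

/-! Writing `v_x = (e₀ + x) + ½Q(x) e∞`, the `e∞`-components of `v_{x₁}` and `v_{x₂}` die in
`(v_{x₁} ∧ v_{x₂}) ∧ e∞`, because `(u ∧ v) ∧ v = 0` for every vector `v`. The `♯` applied on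
top of the dual cancels the `♯` inside it, since `♯` is an involution of `V` and hence of the
Clifford algebra. -/

theorem CliffordAlgebra.algHom_apply_apply_of_involutive {R M : Type*} [CommRing R]
    [AddCommGroup M] [Module R M] {q : QuadraticForm R M}
    (F : CliffordAlgebra q →ₐ[R] CliffordAlgebra q) {f : M → M} (hf : Function.Involutive f)
    (hF : ∀ v, F (ι q v) = ι q (f v)) (X : CliffordAlgebra q) : F (F X) = X := by
  have hFF : F.comp F = AlgHom.id R _ :=
    CliffordAlgebra.hom_ext <| LinearMap.ext fun v => by simp [hF, hf v]
  exact AlgHom.congr_fun hFF X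

lemma sharpV_involutive : Function.Involutive sharpV := by
  intro v
  funext i
  by_cases h : i = 0 <;> by_cases h' : i = 4 <;> simp [sharpV, h, h']

lemma wedgeVec_add (A B : CliffordAlgebra Q) (v : Fin 5 → ℝ) :
    wedgeVec (A + B) v = wedgeVec A v + wedgeVec B v := by
  simp only [wedgeVec, map_add, add_mul, mul_add]
  module

lemma wedge2_add_smul_add_smul (u w v : Fin 5 → ℝ) (a b : ℝ) :
    wedge2 (u + a • v) (w + b • v) = wedge2 u w + wedge2 (b • u - a • w) v := by
  simp only [wedge2, map_add, map_sub, map_smul, add_mul, mul_add, sub_mul, mul_sub,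
    smul_mul_assoc, mul_smul_comm]
  module

/-- Holds for every `v`, null or not, because `ι(v)² = Q(v)` is central. -/
lemma wedgeVec_wedge2_self (u v : Fin 5 → ℝ) : wedgeVec (wedge2 u v) v = 0 := by
  have hv : ι Q v * ι Q v = algebraMap ℝ _ (Q v) := ι_sq_scalar Q v
  have hcomm : ι Q u * algebraMap ℝ _ (Q v) = algebraMap ℝ _ (Q v) * ι Q u :=
    (Algebra.commutes _ _).symm
  simp only [wedgeVec, wedge2, map_smul, map_sub, map_mul, involute_ι, neg_mul_neg,
    smul_mul_assoc, mul_smul_comm, sub_mul, mul_sub, mul_assoc]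
  rw [hv, ← mul_assoc (ι Q v) (ι Q v) (ι Q u), hv, hcomm]
  module

/-- (Line correspondence.) For `x₁, x₂ ∈ span{e₁,e₂,e₃}`, the PGA line
`ℓ = P(x₁) ∨ P(x₂) = (ι(e₀+x₁) ∧ ι(e₀+x₂))^{*_P}` satisfies
`♯ℓ = ((ι(v_{x₁}) ∧ ι(v_{x₂})) ∧ e∞) I_c⁻¹`. -/
theorem sharp_line_correspondence (F : CliffordAlgebra Q →ₐ[ℝ] CliffordAlgebra Q)
    (hF : ∀ v : Fin 5 → ℝ, F (ι Q v) = ι Q (sharpV v)) :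
    ∀ x₁ x₂ : Fin 5 → ℝ, x₁ 0 = 0 → x₁ 4 = 0 → x₂ 0 = 0 → x₂ 4 = 0 →
      F (dualP F (wedge2 (e 0 + x₁) (e 0 + x₂))) =
        wedgeVec (wedge2 (vpt x₁) (vpt x₂)) (e 4) * (-Ic) := by
  intro x₁ x₂ _ _ _ _
  rw [dualP, algHom_apply_apply_of_involutive F sharpV_involutive hF, vpt, vpt,
    wedge2_add_smul_add_smul, wedgeVec_add, wedgeVec_wedge2_self, add_zero]
end

section
/- (Plane correspondence.) For all x₁, x₂, x₃ ∈ E = span{e₁, e₂, e₃}, the image under ♯ of the PGA plane through the PGA points P(x₁), P(x₂), P(x₃) equals the CGA dual (IPNS) representation of that plane: ♯(p) = (((ι(v_{x₁}) ∧ ι(v_{x₂})) ∧ v_{x₃}) ∧ e∞) I_c⁻¹, where p := ((ι(e₀+x₁) ∧ ι(e₀+x₂)) ∧ (e₀+x₃))^{*_P} is the regressive product P(x₁) ∨ P(x₂) ∨ P(x₃) (using that P(xᵢ)^{*_P} = ι(e₀+xᵢ)), v_y := e₀ + y + ½Q(y)e∞, and for vectors u, w ∈ V, ι(u) ∧ ι(w)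 := ½(ι(u)ι(w) − ι(w)ι(u)). -/
open CliffordAlgebra

/-!
Since `♯` is an involutive isometry, the induced algebra map is an involution, so
`♯ p` is just `(((ι(e₀+x₁) ∧ (e₀+x₂)) ∧ (e₀+x₃)) ∧ e∞) I_c⁻¹`. Each conformal point `v_{xᵢ}`
differs from `e₀ + xᵢ` by a multiple of `e∞`, and because the outer product with vectors is
alternating, these multiples die once the blade is wedged with `e∞`.
-/

lemma CliffordAlgebra.involutive_of_map_ι {R M : Type*} [CommRing R] [AddCommGroup M]
    [Module R M] {Q' : QuadraticForm R M} (F : CliffordAlgebra Q' →ₐ[R] CliffordAlgebra Q')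
    {f : M → M} (hF : ∀ v, F (ι Q' v) = ι Q' (f v)) (hf : Function.Involutive f) :
    Function.Involutive F := by
  have hFF : F.comp F = AlgHom.id R _ := by
    ext v
    simp [hF, hf v]
  exact DFunLike.congr_fun hFF

lemma wedgeVec_one (v : Fin 5 → ℝ) : wedgeVec 1 v = ι Q v := by
  simp only [wedgeVec, map_one, one_mul, mul_one]
  module

lemma wedge2_eq_wedgeVec (u w : Fin 5 → ℝ) : wedge2 u w = wedgeVec (ι Q u) w := by
  simp only [wedge2, wedgeVec, involute_ι, mul_neg, sub_eq_add_neg]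

lemma wedgeVec_add_right (A : CliffordAlgebra Q) (u v : Fin 5 → ℝ) :
    wedgeVec A (u + v) = wedgeVec A u + wedgeVec A v := by
  simp only [wedgeVec, map_add, add_mul, mul_add]
  module

lemma wedgeVec_smul_right (A : CliffordAlgebra Q) (r : ℝ) (v : Fin 5 → ℝ) :
    wedgeVec A (r • v) = r • wedgeVec A v := by
  simp only [wedgeVec, map_smul, smul_mul_assoc, mul_smul_comm]
  module

/-- The cross terms cancel in pairs, and what is left is `A (vw + wv) - (vw + wv) A`, which
vanishes because `vw + wv` is a scalar. -/
lemma wedgeVec_wedgeVec_swap (A : CliffordAlgebra Q) (v w : Fin 5 → ℝ) :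
    wedgeVec (wedgeVec A v) w = -wedgeVec (wedgeVec A w) v := by
  have hcomm : A * (ι Q v * ι Q w + ι Q w * ι Q v) = (ι Q v * ι Q w + ι Q w * ι Q v) * A := by
    rw [ι_mul_ι_add_swap]
    exact (Algebra.commutes _ A).symm
  simp only [wedgeVec, map_smul, map_add, map_mul, involute_ι, involute_involute,
    smul_mul_assoc, mul_smul_comm, mul_add, add_mul, mul_neg, neg_mul, mul_assoc] at hcomm ⊢
  linear_combination (norm := module) (1 / 4 : ℝ) • hcomm

lemma wedgeVec_wedgeVec_self (A : CliffordAlgebra Q) (v : Fin 5 → ℝ) :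
    wedgeVec (wedgeVec A v) v = 0 := by
  have h := wedgeVec_wedgeVec_swap A v v
  rwa [eq_neg_iff_add_eq_zero, ← two_smul ℝ, smul_eq_zero_iff_right two_ne_zero] at h

lemma wedgeVec_wedgeVec_add_smul_of_eq {A B : CliffordAlgebra Q} {n : Fin 5 → ℝ}
    (h : wedgeVec A n = wedgeVec B n) (v : Fin 5 → ℝ) (c : ℝ) :
    wedgeVec (wedgeVec A (v + c • n)) n = wedgeVec (wedgeVec B v) n := by
  rw [wedgeVec_wedgeVec_swap, wedgeVec_add_right, wedgeVec_smul_right, wedgeVec_wedgeVec_self,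
    smul_zero, add_zero, h, ← wedgeVec_wedgeVec_swap]

lemma wedgeVec_wedgeVec_wedge2_add_smul (u v w n : Fin 5 → ℝ) (a b c : ℝ) :
    wedgeVec (wedgeVec (wedge2 (u + a • n) (v + b • n)) (w + c • n)) n =
      wedgeVec (wedgeVec (wedge2 u v) w) n := by
  have h₁ : wedgeVec (ι Q (u + a • n)) n = wedgeVec (ι Q u) n := by
    simpa only [wedgeVec_one] using
      wedgeVec_wedgeVec_add_smul_of_eq (A := 1) (B := 1) (n := n) rfl u a
  have h₂ := wedgeVec_wedgeVec_add_smul_of_eq h₁ v b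
  rw [wedge2_eq_wedgeVec, wedge2_eq_wedgeVec]
  exact wedgeVec_wedgeVec_add_smul_of_eq h₂ w c

/-- (Plane correspondence.) For `x₁, x₂, x₃ ∈ span{e₁,e₂,e₃}`, the PGA
plane `p = P(x₁) ∨ P(x₂) ∨ P(x₃) = ((ι(e₀+x₁) ∧ ι(e₀+x₂)) ∧ (e₀+x₃))^{*_P}` satisfies
`♯p = (((ι(v_{x₁}) ∧ ι(v_{x₂})) ∧ v_{x₃}) ∧ e∞) I_c⁻¹`. -/
theorem sharp_plane_correspondence (F : CliffordAlgebra Q →ₐ[ℝ] CliffordAlgebra Q)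
    (hF : ∀ v : Fin 5 → ℝ, F (ι Q v) = ι Q (sharpV v)) :
    ∀ x₁ x₂ x₃ : Fin 5 → ℝ,
      x₁ 0 = 0 → x₁ 4 = 0 → x₂ 0 = 0 → x₂ 4 = 0 → x₃ 0 = 0 → x₃ 4 = 0 →
      F (dualP F (wedgeVec (wedge2 (e 0 + x₁) (e 0 + x₂)) (e 0 + x₃))) =
        wedgeVec (wedgeVec (wedge2 (vpt x₁) (vpt x₂)) (vpt x₃)) (e 4) * (-Ic) := by
  intro x₁ x₂ x₃ _ _ _ _ _ _
  rw [dualP, CliffordAlgebra.involutive_of_map_ι F hF sharpV_involutive, vpt, vpt, vpt,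
    wedgeVec_wedgeVec_wedge2_add_smul]
end
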